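/- Let A be an (α,β)-Frobenius extension of B with dual sets of generators {x_i}, {y_i} and trace map tr (so a = Σ β(tr(a y_i)) x_i = Σ α^{-1}(y_i) tr(x_i α(a)) for all a). Then the element e := Σ_{i=1}^n α^{-1}(y_i) ⊗ x_i ∈ A ⊗_B (_β A) is a Casimir element: a'·e = e·a' for all a' ∈ A, where the left A-action is on the first tensor factor and the right A-action on the second factor is a'' · a' = a''α(a'). -/

import Mathlib

/-!
Expand `a' α⁻¹(y j)` with the second dual-basis identity; its coefficients
`tr (x i α(a') y j)` lie in `B`, so balancedness moves them across the tensor sign as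
`β (tr (x i α(a') y j))`. After exchanging the two sums, the first dual-basis identity
applied to `x i α(a')` collapses the inner sum.
-/

section Balanced

variable {A M ι : Type*} [Ring A] [AddCommGroup M] {B : Subring A} {β : B ≃+* B}
  {φ : A →+ A →+ M}

theorem balanced_sum_mul_apply (hφ : ∀ (z w : A) (b : B), φ (z * (b : A)) w = φ z ((β b : A) * w))
    (s : Finset ι) (z : ι → A) (c : ι → B) (w : A) :
    φ (∑ i ∈ s, z i * (c i : A)) w = ∑ i ∈ s, φ (z i) ((β (c i) : A) * w) := by
  simp only [map_sum, AddMonoidHom.finsetSum_apply, hφ]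

theorem balanced_mul_dual_generator_apply
    (hφ : ∀ (z w : A) (b : B), φ (z * (b : A)) w = φ z ((β b : A) * w))
    (α : A ≃+* A) (tr : A →+ B) {n : ℕ} (x y : Fin n → A)
    (hdual₂ : ∀ a : A, a = ∑ i, α.symm (y i) * ((tr (x i * α a) : B) : A)) (a' : A) (j : Fin n) :
    φ (a' * α.symm (y j)) (x j)
      = ∑ i, φ (α.symm (y i)) ((β (tr (x i * α a' * y j)) : A) * x j) := by
  rw [hdual₂ (a' * α.symm (y j)), balanced_sum_mul_apply hφ]
  simp only [map_mul, RingEquiv.apply_symm_apply, mul_assoc]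

end Balanced

theorem casimir_element_of_dual_generators
    {A : Type u} [Ring A] (B : Subring A) (α : A ≃+* A) (β : B ≃+* B)
    (tr : A →+ B)
    (n : ℕ) (x y : Fin n → A)
    (hdual₁ : ∀ a : A, a = ∑ i, ((β (tr (a * y i)) : B) : A) * x i)
    (hdual₂ : ∀ a : A, a = ∑ i, α.symm (y i) * ((tr (x i * α a) : B) : A)) :
    ∀ (M : Type v) [AddCommGroup M] (φ : A →+ A →+ M),
      (∀ (z w : A) (b : B), φ (z * (b : A)) w = φ z ((β b : A) * w)) →
      ∀ a' : A, ∑ i, φ (a' * α.symm (y i)) (x i) = ∑ i, φ (α.symm (y i)) (x i * α a') := by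
  intro M _ φ hφ a'
  calc ∑ j, φ (a' * α.symm (y j)) (x j)
      = ∑ j, ∑ i, φ (α.symm (y i)) ((β (tr (x i * α a' * y j)) : A) * x j) :=
        Finset.sum_congr rfl fun j _ => balanced_mul_dual_generator_apply hφ α tr x y hdual₂ a' j
    _ = ∑ i, ∑ j, φ (α.symm (y i)) ((β (tr (x i * α a' * y j)) : A) * x j) := Finset.sum_comm
    _ = ∑ i, φ (α.symm (y i)) (x i * α a') :=
        Finset.sum_congr rfl fun i _ => by rw [← map_sum, ← hdual₁]
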